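/- Let π be a history-dependent randomized policy, s_0 ∈ S an initial state with μ(s_0) > 0, and z : ℕ → {0,…,M} a fixed delay sequence. Then for all t, t' ≥ t_z with the same effective decision time τ_t = τ_{t'}, for all s' ∈ S with P^π_z(s̃_{τ_t} = s', s̃_0 = s_0) > 0 and all a ∈ A: P^π_z(ã_t = a | s̃_{τ_t} = s', s̃_0 = s_0) = P^π_z(ã_{t'} = a | s̃_{τ_{t'}} = s', s̃_0 = s_0). In other words, the conditional law of the executed action given the state at the effective decision time and the initial state depends on the time index only through the effective decision time, so the Markov decision rule π'_{τ_t}(s')(a) := P^π_z(ã_t = a | s̃_{τ_t} = s', s̃_0 = s_0) is well defined. -/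

import Mathlib

open scoped ENNReal

/-! ## Stochastic execution-delay MDP with a fixed (observed) delay sequence

`S` and `A` are the finite state and action spaces, `P : S → A → PMF S` is the
transition kernel, `μ : PMF S` the initial distribution, `M ≥ 1` the delay bound,
`abar` the default action queue (only indices `< M` are ever used), and
`z : ℕ → {0,…,M}` a fixed delay sequence.  `P^π_z` denotes the process law with
these deterministic delays. -/

/-- Effective decision time `τ_t(z)`: the largest `t' ≤ t` with `t' + z t' ≤ t`. -/
def tau (z : ℕ → ℕ) (t : ℕ) : ℕ := Nat.findGreatest (fun t' => t' + z t' ≤ t) t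

theorem tau_le (z : ℕ → ℕ) (t : ℕ) : tau z t ≤ t := Nat.findGreatest_le t

/-- Switch time `t_z = min {z 0, 1 + z 1, …, (M-1) + z (M-1)}`. -/
noncomputable def switchTime (M : ℕ) (z : ℕ → ℕ) : ℕ := sInf {x | ∃ t' < M, t' + z t' = x}

/-- A history-dependent randomized policy (for a fixed, observed delay sequence):
at time `t` it maps the history `(s 0, …, s t, a 0, …, a (t-1))` to a distribution
over actions.  It is encoded on whole sequences, together with `IsCausal`. -/
def IsCausal {S A : Type*} (π : ℕ → (ℕ → S) → (ℕ → A) → PMF A) : Prop :=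
  ∀ (t : ℕ) (s s' : ℕ → S) (a a' : ℕ → A),
    (∀ i ≤ t, s i = s' i) → (∀ j < t, a j = a' j) → π t s a = π t s' a'

/-- The probability that the action executed at time `t` is `a t`, given the history:
if `t < min {z 0, 1 + z 1, …, t + z t}` the default action `abar t` is executed
deterministically; otherwise the action is drawn from `π (τ_t) (h (τ_t))`. -/
noncomputable def actProb {S A : Type*} [DecidableEq A] (abar : ℕ → A)
    (π : ℕ → (ℕ → S) → (ℕ → A) → PMF A) (z : ℕ → ℕ)
    (t : ℕ) (s : ℕ → S) (a : ℕ → A) : ℝ≥0∞ :=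
  if t < sInf {x | ∃ t' ≤ t, t' + z t' = x} then (if a t = abar t then 1 else 0)
  else π (tau z t) s a (a t)

/-- `P^π_z`-probability of the prefix `(s 0, a 0, …, s t, a t)`. -/
noncomputable def pathProb {S A : Type*} [DecidableEq A] (P : S → A → PMF S)
    (μ : PMF S) (abar : ℕ → A) (π : ℕ → (ℕ → S) → (ℕ → A) → PMF A) (z : ℕ → ℕ)
    (t : ℕ) (s : ℕ → S) (a : ℕ → A) : ℝ≥0∞ :=
  μ (s 0) * (∏ k ∈ Finset.range (t + 1), actProb abar π z k s a)
    * (∏ k ∈ Finset.range t, P (s k) (a k) (s (k + 1)))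

/-- Extension of a finite vector by a default value. -/
def ext {X : Type*} [Inhabited X] {n : ℕ} (v : Fin n → X) : ℕ → X :=
  fun i => if h : i < n then v ⟨i, h⟩ else default

open Classical in
/-- `P^π_z`-probability of an event `E` on `(s̃ 0, …, s̃ t, ã 0, …, ã t)`. -/
noncomputable def eventProb {S A : Type*} [Fintype S] [Inhabited S] [Fintype A]
    [DecidableEq A] [Inhabited A] (P : S → A → PMF S) (μ : PMF S)
    (abar : ℕ → A) (π : ℕ → (ℕ → S) → (ℕ → A) → PMF A) (z : ℕ → ℕ)
    (t : ℕ) (E : (Fin (t + 1) → S) → (Fin (t + 1) → A) → Prop) : ℝ≥0∞ :=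
  ∑ v : Fin (t + 1) → S, ∑ w : Fin (t + 1) → A,
    if E v w then pathProb P μ abar π z t (ext v) (ext w) else 0

/-!
Both probabilities are expectations over the path prefix up to time `t`. After the switch time
the action at `t` is drawn from `π` at the effective decision time `τ`, so the numerator is the
expectation of `𝟙{s τ = s', s 0 = s0} · π τ (h τ) a` and the denominator that of the indicator
alone; both are functionals of the history up to `τ`. Summing out the last state and action of
a prefix does not change the expectation of such a functional, because the transition kernel
and the action law of a causal policy each sum to one. Hence both expectations may be computed
at horizon `τ = τ_t = τ_{t'}`, which does not see `t`.
-/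

section Tuples

variable {X : Type*} [Inhabited X] {n : ℕ}

lemma ext_apply_of_lt (v : Fin n → X) {i : ℕ} (h : i < n) : ext v i = v ⟨i, h⟩ := dif_pos h

lemma ext_snoc (v : Fin n → X) (x : X) : ext (Fin.snoc v x) = Function.update (ext v) n x := by
  funext i
  rcases lt_trichotomy i n with h | rfl | h
  · rw [Function.update_of_ne h.ne, ext_apply_of_lt _ (h.trans n.lt_succ_self),
      ext_apply_of_lt _ h]
    simp [Fin.snoc, h]
  · simp [ext, Fin.snoc]
  · have : ¬ i < n + 1 := by omega
    simp [ext, Function.update_of_ne h.ne', this, h.not_gt]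

end Tuples

lemma Fintype.sum_fin_succ_pi {X M : Type*} [Fintype X] [AddCommMonoid M]
    {n : ℕ} (f : (Fin (n + 1) → X) → M) :
    ∑ v, f v = ∑ v : Fin n → X, ∑ x, f (Fin.snoc v x) := by
  rw [← (Fin.snocEquiv fun _ => X).sum_comp, Fintype.sum_prod_type, Finset.sum_comm]
  rfl

lemma PMF.sum_coe {α : Type*} [Fintype α] (p : PMF α) : ∑ a, p a = 1 := by
  rw [← tsum_fintype (L := SummationFilter.unconditional _)]
  exact p.tsum_coe

section Prefix

variable {S A X : Type*}

def DependsOnPrefix (n : ℕ) (g : (ℕ → S) → (ℕ → A) → X) : Prop :=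
  ∀ (s s' : ℕ → S) (a a' : ℕ → A),
    (∀ i ≤ n, s i = s' i) → (∀ j < n, a j = a' j) → g s a = g s' a'

lemma DependsOnPrefix.mono {m n : ℕ} {g : (ℕ → S) → (ℕ → A) → X} (hg : DependsOnPrefix m g)
    (hmn : m ≤ n) : DependsOnPrefix n g :=
  fun s s' a a' hs ha => hg s s' a a' (fun i hi => hs i (hi.trans hmn))
    (fun j hj => ha j (hj.trans_le hmn))

lemma DependsOnPrefix.apply_update_action {n : ℕ} {g : (ℕ → S) → (ℕ → A) → X}
    (hg : DependsOnPrefix n g) (s : ℕ → S) (a : ℕ → A) (y : A) :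
    g s (Function.update a n y) = g s a :=
  hg _ _ _ _ (fun _ _ => rfl) (fun _ hj => Function.update_of_ne hj.ne _ _)

lemma DependsOnPrefix.apply_update {n : ℕ} {g : (ℕ → S) → (ℕ → A) → X}
    (hg : DependsOnPrefix n g) (s : ℕ → S) (a : ℕ → A) (x : S) (y : A) :
    g (Function.update s (n + 1) x) (Function.update a n y) = g s a :=
  hg _ _ _ _ (fun _ hi => Function.update_of_ne (Nat.lt_succ_of_le hi).ne _ _)
    (fun _ hj => Function.update_of_ne hj.ne _ _)

lemma IsCausal.dependsOnPrefix {π : ℕ → (ℕ → S) → (ℕ → A) → PMF A} (hπ : IsCausal π)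
    (t : ℕ) : DependsOnPrefix t (π t) :=
  hπ t

end Prefix

section PathWeights

variable {S A : Type*} [DecidableEq A] (P : S → A → PMF S) (μ : PMF S) (abar : ℕ → A)
  (π : ℕ → (ℕ → S) → (ℕ → A) → PMF A) (z : ℕ → ℕ)

lemma actProb_congr (hπ : IsCausal π) {k : ℕ} {s s' : ℕ → S} {a a' : ℕ → A}
    (hs : ∀ i ≤ k, s i = s' i) (ha : ∀ j ≤ k, a j = a' j) :
    actProb abar π z k s a = actProb abar π z k s' a' := by
  unfold actProb
  rw [ha k le_rfl, (hπ.dependsOnPrefix _) s s' a a' (fun i hi => hs i (hi.trans (tau_le z k)))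
    (fun j hj => ha j (hj.le.trans (tau_le z k)))]

lemma sum_actProb_update [Fintype A] (hπ : IsCausal π) (n : ℕ) (s : ℕ → S) (a : ℕ → A) :
    ∑ y, actProb abar π z n s (Function.update a n y) = 1 := by
  unfold actProb
  split_ifs
  · simp
  · simp only [Function.update_self,
      ((hπ.dependsOnPrefix _).mono (tau_le z n)).apply_update_action, PMF.sum_coe]

noncomputable def prefixWeight (n : ℕ) (s : ℕ → S) (a : ℕ → A) : ℝ≥0∞ :=
  μ (s 0) * (∏ k ∈ Finset.range n, actProb abar π z k s a)
    * ∏ k ∈ Finset.range n, P (s k) (a k) (s (k + 1))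

lemma prefixWeight_succ (n : ℕ) (s : ℕ → S) (a : ℕ → A) :
    prefixWeight P μ abar π z (n + 1) s a
      = prefixWeight P μ abar π z n s a * actProb abar π z n s a * P (s n) (a n) (s (n + 1)) := by
  simp only [prefixWeight, Finset.prod_range_succ]
  ring

lemma pathProb_eq_prefixWeight_mul (t : ℕ) (s : ℕ → S) (a : ℕ → A) :
    pathProb P μ abar π z t s a = prefixWeight P μ abar π z t s a * actProb abar π z t s a := by
  simp only [pathProb, prefixWeight, Finset.prod_range_succ]
  ring

lemma prefixWeight_dependsOnPrefix (hπ : IsCausal π) (n : ℕ) :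
    DependsOnPrefix n (prefixWeight P μ abar π z n) := by
  intro s s' a a' hs ha
  have hact : ∀ k ∈ Finset.range n, actProb abar π z k s a = actProb abar π z k s' a' :=
    fun k hk => actProb_congr abar π z hπ
      (fun i hi => hs i (hi.trans (Finset.mem_range.1 hk).le))
      (fun j hj => ha j (hj.trans_lt (Finset.mem_range.1 hk)))
  have htrans : ∀ k ∈ Finset.range n,
      P (s k) (a k) (s (k + 1)) = P (s' k) (a' k) (s' (k + 1)) := by
    intro k hk
    have hk := Finset.mem_range.1 hk
    rw [hs k hk.le, ha k hk, hs (k + 1) hk]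
  simp only [prefixWeight, hs 0 (Nat.zero_le n), Finset.prod_congr rfl hact,
    Finset.prod_congr rfl htrans]

lemma prefixWeight_succ_update (hπ : IsCausal π) (n : ℕ) (s : ℕ → S) (a : ℕ → A)
    (x : S) (y : A) :
    prefixWeight P μ abar π z (n + 1) (Function.update s (n + 1) x) (Function.update a n y)
      = prefixWeight P μ abar π z n s a *
          (actProb abar π z n s (Function.update a n y) * P (s n) y x) := by
  have hs : ∀ i ≤ n, Function.update s (n + 1) x i = s i :=
    fun i hi => Function.update_of_ne (Nat.lt_succ_of_le hi).ne _ _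
  rw [prefixWeight_succ, (prefixWeight_dependsOnPrefix P μ abar π z hπ n).apply_update,
    actProb_congr abar π z hπ hs (fun _ _ => rfl), hs n le_rfl, Function.update_self,
    Function.update_self, mul_assoc]

end PathWeights

section Marginals

variable {S A : Type*} [Fintype S] [Inhabited S] [Fintype A] [DecidableEq A] [Inhabited A]
  (P : S → A → PMF S) (μ : PMF S) (abar : ℕ → A) (π : ℕ → (ℕ → S) → (ℕ → A) → PMF A)
  (z : ℕ → ℕ)

noncomputable def prefixExpectation (n : ℕ) (g : (ℕ → S) → (ℕ → A) → ℝ≥0∞) : ℝ≥0∞ :=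
  ∑ v : Fin (n + 1) → S, ∑ w : Fin n → A,
    prefixWeight P μ abar π z n (ext v) (ext w) * g (ext v) (ext w)

lemma prefixExpectation_succ (hπ : IsCausal π) {n : ℕ} {g : (ℕ → S) → (ℕ → A) → ℝ≥0∞}
    (hg : DependsOnPrefix n g) :
    prefixExpectation P μ abar π z (n + 1) g = prefixExpectation P μ abar π z n g := by
  unfold prefixExpectation
  rw [Fintype.sum_fin_succ_pi]
  refine Finset.sum_congr rfl fun v _ => ?_
  simp only [Fintype.sum_fin_succ_pi (X := A), ext_snoc, hg.apply_update,
    prefixWeight_succ_update P μ abar π z hπ]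
  rw [Finset.sum_comm]
  refine Finset.sum_congr rfl fun w _ => ?_
  rw [Finset.sum_comm]
  simp only [← Finset.sum_mul, ← Finset.mul_sum, PMF.sum_coe, mul_one,
    sum_actProb_update abar π z hπ]

lemma prefixExpectation_eq_of_le (hπ : IsCausal π) {m n : ℕ} {g : (ℕ → S) → (ℕ → A) → ℝ≥0∞}
    (hg : DependsOnPrefix m g) (hmn : m ≤ n) :
    prefixExpectation P μ abar π z n g = prefixExpectation P μ abar π z m g := by
  induction n, hmn using Nat.le_induction with
  | base => rfl
  | succ n hmn ih => rw [prefixExpectation_succ P μ abar π z hπ (hg.mono hmn), ih]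

end Marginals

section Events

open Classical

variable {S A : Type*} [Fintype S] [Inhabited S] [Fintype A] [DecidableEq A] [Inhabited A]
  (P : S → A → PMF S) (μ : PMF S) (abar : ℕ → A) (π : ℕ → (ℕ → S) → (ℕ → A) → PMF A)
  (z : ℕ → ℕ)

lemma eventProb_eq_sum_snoc (hπ : IsCausal π) (t : ℕ)
    (E : (Fin (t + 1) → S) → (Fin (t + 1) → A) → Prop) :
    eventProb P μ abar π z t E = ∑ v : Fin (t + 1) → S, ∑ w : Fin t → A, ∑ y,
      if E v (Fin.snoc w y) then
        prefixWeight P μ abar π z t (ext v) (ext w) *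
          actProb abar π z t (ext v) (Function.update (ext w) t y)
      else 0 := by
  unfold eventProb
  refine Finset.sum_congr rfl fun v _ => ?_
  simp only [Fintype.sum_fin_succ_pi (X := A), ext_snoc, pathProb_eq_prefixWeight_mul,
    (prefixWeight_dependsOnPrefix P μ abar π z hπ t).apply_update_action]

lemma eventProb_state_eq_prefixExpectation (hπ : IsCausal π) (t τ : ℕ) (hτ : τ < t + 1)
    (s' s0 : S) :
    eventProb P μ abar π z t (fun v _ => v ⟨τ, hτ⟩ = s' ∧ v 0 = s0)
      = prefixExpectation P μ abar π z t
          (fun s _ => if s τ = s' ∧ s 0 = s0 then 1 else 0) := by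
  rw [eventProb_eq_sum_snoc P μ abar π z hπ]
  unfold prefixExpectation
  refine Finset.sum_congr rfl fun v _ => Finset.sum_congr rfl fun w _ => ?_
  rw [← ext_apply_of_lt v hτ, show v 0 = ext v 0 from (ext_apply_of_lt v t.succ_pos).symm]
  dsimp only
  split_ifs
  · rw [← Finset.mul_sum, sum_actProb_update abar π z hπ]
  · simp

lemma eventProb_state_action_eq_prefixExpectation (hπ : IsCausal π) (t τ : ℕ) (hτ : τ < t + 1)
    (ht : ¬ t < sInf {x | ∃ k ≤ t, k + z k = x}) (s' s0 : S) (a : A) :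
    eventProb P μ abar π z t (fun v w => v ⟨τ, hτ⟩ = s' ∧ w (Fin.last t) = a ∧ v 0 = s0)
      = prefixExpectation P μ abar π z t
          (fun s b => if s τ = s' ∧ s 0 = s0 then π (tau z t) s b a else 0) := by
  rw [eventProb_eq_sum_snoc P μ abar π z hπ]
  unfold prefixExpectation
  refine Finset.sum_congr rfl fun v _ => Finset.sum_congr rfl fun w _ => ?_
  rw [← ext_apply_of_lt v hτ, show v 0 = ext v 0 from (ext_apply_of_lt v t.succ_pos).symm]
  have hact : actProb abar π z t (ext v) (Function.update (ext w) t a)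
      = π (tau z t) (ext v) (ext w) a := by
    rw [actProb, if_neg ht, Function.update_self,
      ((hπ.dependsOnPrefix _).mono (tau_le z t)).apply_update_action]
  by_cases h1 : ext v τ = s' <;> by_cases h2 : ext v 0 = s0 <;> simp [h1, h2, hact]

end Events

lemma sInf_delays_le_of_switchTime_le {M : ℕ} (hM : 1 ≤ M) {z : ℕ → ℕ} {t : ℕ}
    (ht : switchTime M z ≤ t) : sInf {x | ∃ k ≤ t, k + z k = x} ≤ t := by
  have hne : {x | ∃ k < M, k + z k = x}.Nonempty := ⟨z 0, 0, hM, zero_add _⟩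
  obtain ⟨k, -, hk⟩ := Nat.sInf_mem hne
  have hkt : k + z k ≤ t := hk.trans_le ht
  have hmem : k + z k ∈ {x | ∃ k ≤ t, k + z k = x} :=
    ⟨k, (Nat.le_add_right k (z k)).trans hkt, rfl⟩
  exact (Nat.sInf_le hmem).trans hkt

theorem statement9_general {S A : Type*} [Fintype S] [Inhabited S] [Fintype A]
    [DecidableEq A] [Inhabited A]
    (P : S → A → PMF S) (μ : PMF S) (M : ℕ) (hM : 1 ≤ M) (abar : ℕ → A)
    (z : ℕ → ℕ)
    (π : ℕ → (ℕ → S) → (ℕ → A) → PMF A) (hπ : IsCausal π)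
    (s0 : S)
    (t t' : ℕ) (ht : switchTime M z ≤ t) (ht' : switchTime M z ≤ t')
    (hτ : tau z t = tau z t') (s' : S)
    (a : A) :
    eventProb P μ abar π z t (fun v w =>
        v ⟨tau z t, Nat.lt_succ_of_le (tau_le z t)⟩ = s' ∧
          w (Fin.last t) = a ∧ v 0 = s0)
      / eventProb P μ abar π z t (fun v _ =>
        v ⟨tau z t, Nat.lt_succ_of_le (tau_le z t)⟩ = s' ∧ v 0 = s0)
    = eventProb P μ abar π z t' (fun v w =>
        v ⟨tau z t', Nat.lt_succ_of_le (tau_le z t')⟩ = s' ∧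
          w (Fin.last t') = a ∧ v 0 = s0)
      / eventProb P μ abar π z t' (fun v _ =>
        v ⟨tau z t', Nat.lt_succ_of_le (tau_le z t')⟩ = s' ∧ v 0 = s0) := by
  classical
  rw [eventProb_state_action_eq_prefixExpectation P μ abar π z hπ t _ _
      (sInf_delays_le_of_switchTime_le hM ht).not_gt,
    eventProb_state_action_eq_prefixExpectation P μ abar π z hπ t' _ _
      (sInf_delays_le_of_switchTime_le hM ht').not_gt,
    eventProb_state_eq_prefixExpectation P μ abar π z hπ t,
    eventProb_state_eq_prefixExpectation P μ abar π z hπ t', ← hτ]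
  set τ := tau z t
  have hnum : DependsOnPrefix τ fun s b => if s τ = s' ∧ s 0 = s0 then π τ s b a else 0 :=
    fun s s₂ b b₂ hs hb => by
      dsimp only; rw [hs 0 τ.zero_le, hs τ le_rfl, hπ τ s s₂ b b₂ hs hb]
  have hden : DependsOnPrefix τ fun s (_ : ℕ → A) =>
      if s τ = s' ∧ s 0 = s0 then (1 : ℝ≥0∞) else 0 :=
    fun s s₂ _ _ hs _ => by dsimp only; rw [hs 0 τ.zero_le, hs τ le_rfl]
  have hτt' : τ ≤ t' := hτ ▸ tau_le z t'
  rw [prefixExpectation_eq_of_le P μ abar π z hπ hnum (tau_le z t),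
    prefixExpectation_eq_of_le P μ abar π z hπ hden (tau_le z t),
    prefixExpectation_eq_of_le P μ abar π z hπ hnum hτt',
    prefixExpectation_eq_of_le P μ abar π z hπ hden hτt']

/-- Let `π` be a history-dependent randomized policy, `s0` an initial
state with `μ s0 > 0`, and `z` a fixed delay sequence.  Then for all `t, t' ≥ t_z`
with the same effective decision time `τ_t = τ_{t'}`, all `s' : S` with
`P^π_z(s̃ τ_t = s', s̃ 0 = s0) > 0`, and all `a : A`:
`P^π_z(ã t = a | s̃ τ_t = s', s̃ 0 = s0) = P^π_z(ã t' = a | s̃ τ_{t'} = s', s̃ 0 = s0)`.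
Hence the Markov decision rule `π'_{τ_t}(s')(a) := P^π_z(ã t = a | s̃ τ_t = s', s̃ 0 = s0)`
is well defined. -/
theorem statement9 {S A : Type*} [Fintype S] [Inhabited S] [Fintype A]
    [DecidableEq A] [Inhabited A]
    (P : S → A → PMF S) (μ : PMF S) (M : ℕ) (hM : 1 ≤ M) (abar : ℕ → A)
    (z : ℕ → ℕ) (hz : ∀ i, z i ≤ M)
    (π : ℕ → (ℕ → S) → (ℕ → A) → PMF A) (hπ : IsCausal π)
    (s0 : S) (hs0 : 0 < μ s0)
    (t t' : ℕ) (ht : switchTime M z ≤ t) (ht' : switchTime M z ≤ t')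
    (hτ : tau z t = tau z t') (s' : S)
    (hpos : 0 < eventProb P μ abar π z t (fun v _ =>
        v ⟨tau z t, Nat.lt_succ_of_le (tau_le z t)⟩ = s' ∧ v 0 = s0))
    (a : A) :
    eventProb P μ abar π z t (fun v w =>
        v ⟨tau z t, Nat.lt_succ_of_le (tau_le z t)⟩ = s' ∧
          w (Fin.last t) = a ∧ v 0 = s0)
      / eventProb P μ abar π z t (fun v _ =>
        v ⟨tau z t, Nat.lt_succ_of_le (tau_le z t)⟩ = s' ∧ v 0 = s0)
    = eventProb P μ abar π z t' (fun v w =>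
        v ⟨tau z t', Nat.lt_succ_of_le (tau_le z t')⟩ = s' ∧
          w (Fin.last t') = a ∧ v 0 = s0)
      / eventProb P μ abar π z t' (fun v _ =>
        v ⟨tau z t', Nat.lt_succ_of_le (tau_le z t')⟩ = s' ∧ v 0 = s0) :=
  statement9_general P μ M hM abar z π hπ s0 t t' ht ht' hτ s' a
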